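/- Let k ≥ 1, let n : Fin k → ℕ with n_i ≥ 1, and let ε be an allowable smoothing as above. Every term m of the sequence generated from [n] by ε (per Definition 2.1) satisfies |m| ≥ 2. -/

import Mathlib

/-- The sign adjustment ∏_{j < i, ε_j = 1} (-1)^{n_j} from step 3 of Definition 2.1. -/
def cfSign (n ε : ℕ → ℕ) (i : ℕ) : ℤ :=
  ∏ j ∈ (Finset.Ico 1 i).filter (fun j => ε j = 1), (-1 : ℤ) ^ (n j)

/-- The block of terms replacing n_i in Definition 2.1: if ε_i = 1, an alternating
sequence -2, 2, -2, ..., ±2 of length n_i - 1; if ε_i = 0, the single term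
n_i + ε_{i-1} + ε_{i+1}; all terms multiplied by the sign adjustment. -/
def cfBlock (n ε : ℕ → ℕ) (i : ℕ) : List ℤ :=
  if ε i = 1 then
    (List.range (n i - 1)).map (fun t => cfSign n ε i * (-1) ^ (t + 1) * 2)
  else
    [cfSign n ε i * ((n i : ℤ) + (ε (i - 1) : ℤ) + (ε (i + 1) : ℤ))]

/-- The continued fraction expansion generated from [n_1,...,n_k] by the smoothing ε
(Definition 2.1), with indices 1,...,k. -/
def cfGen (k : ℕ) (n ε : ℕ → ℕ) : List ℤ :=
  (List.range k).flatMap (fun i => cfBlock n ε (i + 1))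


lemma cfSign_abs (n ε : ℕ → ℕ) (i : ℕ) : |cfSign n ε i| = 1 := by
  unfold cfSign
  rw [Finset.abs_prod]
  apply Finset.prod_eq_one
  intro j _
  rw [abs_pow, abs_neg, abs_one, one_pow]

/-- every term of the sequence generated from [n] by an allowable
smoothing ε has absolute value at least 2. -/
theorem stmt_5 (k : ℕ) (hk : 1 ≤ k) (n : ℕ → ℕ) (ε : ℕ → ℕ)
    (hn : ∀ i, 1 ≤ i → i ≤ k → 1 ≤ n i)
    (hε01 : ∀ i, ε i = 0 ∨ ε i = 1)
    (hε0 : ε 0 = 0) (hεtop : ε (k + 1) = 0)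
    (h1 : ∀ i, 1 ≤ i → i ≤ k → ε i = 1 → ε (i - 1) = 0 ∧ ε (i + 1) = 0)
    (h2 : ∀ i, 1 ≤ i → i ≤ k → n i = 1 → ε i = 0 → ε (i - 1) = 1 ∨ ε (i + 1) = 1) :
    ∀ m ∈ cfGen k n ε, 2 ≤ |m| := by
  intro m hm
  simp only [cfGen, List.mem_flatMap, List.mem_range] at hm
  obtain ⟨i, hi, hmem⟩ := hm
  set j := i + 1 with hj
  have hj1 : 1 ≤ j := Nat.le_add_left 1 i
  have hjk : j ≤ k := hi
  unfold cfBlock at hmem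
  rcases hε01 j with hε | hε
  · rw [hε, if_neg (by decide)] at hmem
    simp only [List.mem_singleton] at hmem
    subst hmem
    rw [abs_mul, cfSign_abs, one_mul]
    have ha : (0:ℤ) ≤ (ε (j-1) : ℤ) := Int.ofNat_nonneg _
    have hb : (0:ℤ) ≤ (ε (j+1) : ℤ) := Int.ofNat_nonneg _
    have hsum : (2 : ℤ) ≤ (n j : ℤ) + (ε (j - 1) : ℤ) + (ε (j + 1) : ℤ) := by
      rcases Nat.lt_or_ge (n j) 2 with h | h
      · have hn1 : n j = 1 := le_antisymm (by omega) (hn j hj1 hjk)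
        rcases h2 j hj1 hjk hn1 hε with he | he <;> rw [hn1, he] <;> push_cast <;> linarith
      · have : (2 : ℤ) ≤ (n j : ℤ) := by exact_mod_cast h
        linarith
    rw [abs_of_nonneg (by linarith)]
    exact hsum
  · rw [hε, if_pos rfl] at hmem
    simp only [List.mem_map, List.mem_range] at hmem
    obtain ⟨t, _, rfl⟩ := hmem
    rw [abs_mul, abs_mul, cfSign_abs, abs_pow, abs_neg, abs_one, one_pow]
    norm_num
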